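/- Let 1 < p < ∞. For every cube Q_0 ⊂ ℝ^n and every f ∈ L^1(Q_0) with ‖f‖_{JN_p^{dyadic},Q_0} < ∞, one has ‖M^#_{Q_0}f‖_{L^{p,∞},Q_0} ≤ ‖f‖_{JN_p^{dyadic},Q_0}, where M^#_{Q_0} is the local dyadic sharp maximal function. -/

import Mathlib

open MeasureTheory Filter
open scoped ENNReal NNReal Topology

structure Cube (n : ℕ) where
  corner : Fin n → ℝ
  side : ℝ
  side_pos : 0 < side

namespace Cube

variable {n : ℕ}

/-- The (half-open) cube determined by the data. -/
def set (Q : Cube n) : Set (Fin n → ℝ) :=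
  {x | ∀ i, Q.corner i ≤ x i ∧ x i < Q.corner i + Q.side}

/-- The dyadic subcube of `Q` of generation `k` in position `m`. -/
noncomputable def dyadic (Q : Cube n) (k : ℕ) (m : Fin n → ℕ) : Cube n :=
  ⟨fun i => Q.corner i + Q.side / 2 ^ k * (m i : ℝ), Q.side / 2 ^ k,
    div_pos Q.side_pos (by positivity)⟩

/-- `Q` belongs to the family `𝒟(Q₀)` of dyadic subcubes of `Q₀`. -/
def IsDyadicSub (Q₀ Q : Cube n) : Prop :=
  ∃ (k : ℕ) (m : Fin n → ℕ), (∀ i, m i < 2 ^ k) ∧ Q = Q₀.dyadic k m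

/-- The average `(1/|Q|)∫_Q f dx` (of a nonnegative function), with values in `ℝ≥0∞`. -/
noncomputable def avg (Q : Cube n) (f : (Fin n → ℝ) → ℝ) : ℝ≥0∞ :=
  (∫⁻ x in Q.set, ENNReal.ofReal (f x)) / volume Q.set

/-- The (real-valued) average `f_Q = (1/|Q|)∫_Q f dx`. -/
noncomputable def ravg (Q : Cube n) (f : (Fin n → ℝ) → ℝ) : ℝ :=
  ⨍ x in Q.set, f x

/-- The local dyadic maximal function `M_{Q₀} f`. -/
noncomputable def maximal (Q₀ : Cube n) (f : (Fin n → ℝ) → ℝ) (x : Fin n → ℝ) : ℝ≥0∞ :=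
  ⨆ (k : ℕ) (m : Fin n → ℕ) (_ : (∀ i, m i < 2 ^ k) ∧ x ∈ (Q₀.dyadic k m).set),
    avg (Q₀.dyadic k m) f

/-- `G*_{Q₀}(x) = sup { g(Q) : Q ∈ 𝒟(Q₀), x ∈ Q }`. -/
noncomputable def gstar (Q₀ : Cube n) (g : Cube n → ℝ) (x : Fin n → ℝ) : ℝ≥0∞ :=
  ⨆ (k : ℕ) (m : Fin n → ℕ) (_ : (∀ i, m i < 2 ^ k) ∧ x ∈ (Q₀.dyadic k m).set),
    ENNReal.ofReal (g (Q₀.dyadic k m))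

/-- The local dyadic sharp maximal function `M^#_{Q₀} f`. -/
noncomputable def sharpMaximal (Q₀ : Cube n) (f : (Fin n → ℝ) → ℝ) (x : Fin n → ℝ) : ℝ≥0∞ :=
  ⨆ (k : ℕ) (m : Fin n → ℕ) (_ : (∀ i, m i < 2 ^ k) ∧ x ∈ (Q₀.dyadic k m).set),
    avg (Q₀.dyadic k m) (fun y => |f y - ravg (Q₀.dyadic k m) f|)

/-- The normalized weak `L^p` (quasi-)norm on a cube, for an `ℝ≥0∞`-valued function. -/
noncomputable def wnorm (Q : Cube n) (p : ℝ) (f : (Fin n → ℝ) → ℝ≥0∞) : ℝ≥0∞ :=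
  ⨆ (t : ℝ) (_ : 0 < t),
    ENNReal.ofReal t * (volume {x ∈ Q.set | ENNReal.ofReal t < f x} / volume Q.set) ^ (1 / p)

/-- The normalized `L^p` norm `((1/|Q|)∫_Q f^p dx)^{1/p}` for an `ℝ≥0∞`-valued function. -/
noncomputable def lpnorm (Q : Cube n) (p : ℝ) (f : (Fin n → ℝ) → ℝ≥0∞) : ℝ≥0∞ :=
  ((∫⁻ x in Q.set, f x ^ p) / volume Q.set) ^ (1 / p)

/-- The dyadic John–Nirenberg functional `‖f‖_{JN_p^{dyadic},Q}`. -/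
noncomputable def jnNorm (Q : Cube n) (p : ℝ) (f : (Fin n → ℝ) → ℝ) : ℝ≥0∞ :=
  ⨆ (𝒮 : Set (Cube n)) (_ : (∀ R ∈ 𝒮, Q.IsDyadicSub R) ∧ 𝒮.PairwiseDisjoint Cube.set),
    ((∑' R : 𝒮, avg (R : Cube n) (fun x => |f x - ravg (R : Cube n) f|) ^ p *
        volume (R : Cube n).set) / volume Q.set) ^ (1 / p)

/-- `sup ((1/|Q|) Σ_i a(Q_i)^p |Q_i|)^{1/p}` over pairwise disjoint families in `𝒟(Q)`. -/
noncomputable def dpSup (Q : Cube n) (p : ℝ) (a : Cube n → ℝ) : ℝ≥0∞ :=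
  ⨆ (𝒮 : Set (Cube n)) (_ : (∀ R ∈ 𝒮, Q.IsDyadicSub R) ∧ 𝒮.PairwiseDisjoint Cube.set),
    ((∑' R : 𝒮, ENNReal.ofReal (a (R : Cube n)) ^ p * volume (R : Cube n).set) /
      volume Q.set) ^ (1 / p)

/-- `‖a‖_{D_p,Q}`. -/
noncomputable def dpNorm (Q : Cube n) (p : ℝ) (a : Cube n → ℝ) : ℝ≥0∞ :=
  dpSup Q p a / ENNReal.ofReal (a Q)

/-- `‖a‖_{D_p^{dyadic}(Q₀)}`. -/
noncomputable def dpGlobal (Q₀ : Cube n) (p : ℝ) (a : Cube n → ℝ) : ℝ≥0∞ :=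
  ⨆ (Q : Cube n) (_ : Q₀.IsDyadicSub Q), dpNorm Q p a

end Cube

/-!
Fix `t > 0` and stop at the maximal dyadic cubes `Q ⊆ Q₀` whose mean oscillation exceeds `t`.
These cubes are pairwise disjoint and cover `{M^#_{Q₀} f > t}`, hence
`t^p |{M^# f > t}| ≤ Σ_Q t^p |Q| ≤ Σ_Q osc(f, Q)^p |Q| ≤ |Q₀| ‖f‖^p_{JN_p}`.
-/

namespace Cube

variable {n : ℕ}

theorem mem_dyadic_iff {Q₀ : Cube n} {k : ℕ} {m : Fin n → ℕ} {x : Fin n → ℝ} :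
    x ∈ (Q₀.dyadic k m).set ↔ ∀ i,
      (m i : ℝ) * (Q₀.side / 2 ^ k) ≤ x i - Q₀.corner i ∧
      x i - Q₀.corner i < ((m i : ℝ) + 1) * (Q₀.side / 2 ^ k) := by
  simp only [Cube.set, Cube.dyadic, Set.mem_ofPred_eq]
  refine forall_congr' fun i => ?_
  constructor <;> rintro ⟨h1, h2⟩ <;> constructor <;> nlinarith [h1, h2]

theorem eq_of_mem_dyadic_of_mem_dyadic {Q₀ : Cube n} {k : ℕ} {m m' : Fin n → ℕ}
    {x : Fin n → ℝ} (h : x ∈ (Q₀.dyadic k m).set) (h' : x ∈ (Q₀.dyadic k m').set) :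
    m = m' := by
  rw [mem_dyadic_iff] at h h'
  funext i
  have hside : (0 : ℝ) < Q₀.side / 2 ^ k := div_pos Q₀.side_pos (by positivity)
  rcases Nat.lt_trichotomy (m i) (m' i) with hlt | heq | hlt
  · have hc : (m i : ℝ) + 1 ≤ m' i := by exact_mod_cast hlt
    nlinarith [(h i).2, (h' i).1]
  · exact heq
  · have hc : (m' i : ℝ) + 1 ≤ m i := by exact_mod_cast hlt
    nlinarith [(h' i).2, (h i).1]

theorem dyadic_subset_dyadic_div {Q₀ : Cube n} {j k : ℕ} (hjk : j ≤ k) (m : Fin n → ℕ) :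
    (Q₀.dyadic k m).set ⊆ (Q₀.dyadic j fun i => m i / 2 ^ (k - j)).set := by
  intro x hx
  rw [mem_dyadic_iff] at hx ⊢
  intro i
  obtain ⟨hlo, hhi⟩ := hx i
  set a := 2 ^ (k - j)
  have hside : (0 : ℝ) < Q₀.side / 2 ^ k := div_pos Q₀.side_pos (by positivity)
  have hscale : Q₀.side / 2 ^ j = a * (Q₀.side / 2 ^ k) := by
    rw [show (2 : ℝ) ^ k = 2 ^ (k - j) * 2 ^ j by rw [← pow_add, Nat.sub_add_cancel hjk]]
    push_cast [a]
    field_simp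
  have hdiv_le : ((m i / a : ℕ) : ℝ) * a ≤ m i := by
    exact_mod_cast Nat.div_mul_le_self (m i) a
  have hlt_succ : (m i : ℝ) + 1 ≤ (((m i / a : ℕ) : ℝ) + 1) * a := by
    have : m i < (m i / a + 1) * a := by
      have := Nat.div_add_mod (m i) a
      have := Nat.mod_lt (m i) (show 0 < a by positivity)
      nlinarith
    exact_mod_cast this
  rw [hscale]
  constructor <;> nlinarith

theorem div_two_pow_sub_lt {j k m : ℕ} (hm : m < 2 ^ k) (hjk : j ≤ k) :
    m / 2 ^ (k - j) < 2 ^ j := by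
  rwa [Nat.div_lt_iff_lt_mul (Nat.pow_pos two_pos), ← pow_add, Nat.add_sub_cancel' hjk]

noncomputable def oscillation (f : (Fin n → ℝ) → ℝ) (Q : Cube n) : ℝ≥0∞ :=
  avg Q fun y => |f y - ravg Q f|

noncomputable def dyadicSup (Q₀ : Cube n) (g : Cube n → ℝ≥0∞) (x : Fin n → ℝ) : ℝ≥0∞ :=
  ⨆ (k : ℕ) (m : Fin n → ℕ) (_ : (∀ i, m i < 2 ^ k) ∧ x ∈ (Q₀.dyadic k m).set),
    g (Q₀.dyadic k m)

noncomputable def packingSup (Q : Cube n) (p : ℝ) (g : Cube n → ℝ≥0∞) : ℝ≥0∞ :=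
  ⨆ (𝒮 : Set (Cube n)) (_ : (∀ R ∈ 𝒮, Q.IsDyadicSub R) ∧ 𝒮.PairwiseDisjoint Cube.set),
    ((∑' R : 𝒮, g R ^ p * volume (R : Cube n).set) / volume Q.set) ^ (1 / p)

theorem sharpMaximal_eq_dyadicSup (Q₀ : Cube n) (f : (Fin n → ℝ) → ℝ) :
    sharpMaximal Q₀ f = dyadicSup Q₀ (oscillation f) :=
  rfl

theorem jnNorm_eq_packingSup (Q₀ : Cube n) (p : ℝ) (f : (Fin n → ℝ) → ℝ) :
    jnNorm Q₀ p f = packingSup Q₀ p (oscillation f) :=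
  rfl

def stoppingCubes (Q₀ : Cube n) (g : Cube n → ℝ≥0∞) (T : ℝ≥0∞) : Set (Cube n) :=
  {Q | ∃ k m, (∀ i, m i < 2 ^ k) ∧ Q = Q₀.dyadic k m ∧ T < g Q ∧
    ∀ j < k, g (Q₀.dyadic j fun i => m i / 2 ^ (k - j)) ≤ T}

section stoppingCubes

variable {Q₀ : Cube n} {g : Cube n → ℝ≥0∞} {T : ℝ≥0∞}

theorem isDyadicSub_of_mem_stoppingCubes {Q : Cube n} (hQ : Q ∈ stoppingCubes Q₀ g T) :
    Q₀.IsDyadicSub Q := by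
  obtain ⟨k, m, hm, rfl, -⟩ := hQ
  exact ⟨k, m, hm, rfl⟩

theorem lt_apply_of_mem_stoppingCubes {Q : Cube n} (hQ : Q ∈ stoppingCubes Q₀ g T) :
    T < g Q := by
  obtain ⟨k, m, -, rfl, hT, -⟩ := hQ
  exact hT

theorem stoppingCubes_countable : (stoppingCubes Q₀ g T).Countable := by
  refine (Set.countable_range fun km : ℕ × (Fin n → ℕ) => Q₀.dyadic km.1 km.2).mono ?_
  rintro Q ⟨k, m, -, rfl, -⟩
  exact ⟨(k, m), rfl⟩

/-- A stopping cube meeting a stopping cube of a later generation is that cube: otherwise it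
would be an ancestor of it on which `g` exceeds `T`. -/
theorem dyadic_eq_of_mem_of_mem_of_le {k k' : ℕ} {m m' : Fin n → ℕ} {x : Fin n → ℝ}
    (hkk' : k ≤ k') (hx : x ∈ (Q₀.dyadic k m).set) (hx' : x ∈ (Q₀.dyadic k' m').set)
    (hT : T < g (Q₀.dyadic k m))
    (hmax' : ∀ j < k', g (Q₀.dyadic j fun i => m' i / 2 ^ (k' - j)) ≤ T) :
    Q₀.dyadic k m = Q₀.dyadic k' m' := by
  rcases hkk'.eq_or_lt with rfl | hlt
  · rw [eq_of_mem_dyadic_of_mem_dyadic hx hx']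
  · have hm := eq_of_mem_dyadic_of_mem_dyadic hx (dyadic_subset_dyadic_div hlt.le m' hx')
    subst hm
    exact absurd (hmax' k hlt) hT.not_ge

theorem stoppingCubes_pairwiseDisjoint : (stoppingCubes Q₀ g T).PairwiseDisjoint Cube.set := by
  rintro _ ⟨k, m, -, rfl, hT, hmax⟩ _ ⟨k', m', -, rfl, hT', hmax'⟩ hne
  refine Set.disjoint_left.2 fun x hx hx' => hne ?_
  rcases le_total k k' with h | h
  · exact dyadic_eq_of_mem_of_mem_of_le h hx hx' hT hmax'
  · exact (dyadic_eq_of_mem_of_mem_of_le h hx' hx hT' hmax).symm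

theorem exists_mem_stoppingCubes_of_lt_dyadicSup {x : Fin n → ℝ} (hx : T < dyadicSup Q₀ g x) :
    ∃ Q ∈ stoppingCubes Q₀ g T, x ∈ Q.set := by
  classical
  simp only [dyadicSup, lt_iSup_iff] at hx
  have hgen : ∃ k m, (∀ i, m i < 2 ^ k) ∧ x ∈ (Q₀.dyadic k m).set ∧ T < g (Q₀.dyadic k m) := by
    obtain ⟨k, m, ⟨hm, hxm⟩, hT⟩ := hx
    exact ⟨k, m, hm, hxm, hT⟩
  obtain ⟨m, hm, hxm, hT⟩ := Nat.find_spec hgen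
  refine ⟨_, ⟨Nat.find hgen, m, hm, rfl, hT, fun j hj => ?_⟩, hxm⟩
  by_contra hgt
  exact Nat.find_min hgen hj ⟨_, fun i => div_two_pow_sub_lt (hm i) hj.le,
    dyadic_subset_dyadic_div hj.le m hxm, not_le.1 hgt⟩

theorem rpow_mul_volume_lt_dyadicSup_le_tsum {p : ℝ} (hp : 0 ≤ p) :
    T ^ p * volume {x ∈ Q₀.set | T < dyadicSup Q₀ g x} ≤
      ∑' R : stoppingCubes Q₀ g T, g R ^ p * volume (R : Cube n).set := by
  have hcover : {x ∈ Q₀.set | T < dyadicSup Q₀ g x} ⊆ ⋃ R ∈ stoppingCubes Q₀ g T, R.set :=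
    fun x hx => by
      obtain ⟨Q, hQ, hxQ⟩ := exists_mem_stoppingCubes_of_lt_dyadicSup hx.2
      exact Set.mem_biUnion hQ hxQ
  calc T ^ p * volume {x ∈ Q₀.set | T < dyadicSup Q₀ g x}
      ≤ T ^ p * ∑' R : stoppingCubes Q₀ g T, volume (R : Cube n).set := by
        gcongr
        exact (measure_mono hcover).trans (measure_biUnion_le volume stoppingCubes_countable _)
    _ = ∑' R : stoppingCubes Q₀ g T, T ^ p * volume (R : Cube n).set := ENNReal.tsum_mul_left.symm
    _ ≤ _ := ENNReal.tsum_le_tsum fun R => by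
        gcongr
        exact (lt_apply_of_mem_stoppingCubes R.2).le

end stoppingCubes

theorem wnorm_dyadicSup_le_packingSup (Q₀ : Cube n) (g : Cube n → ℝ≥0∞) {p : ℝ} (hp : 0 < p) :
    wnorm Q₀ p (dyadicSup Q₀ g) ≤ packingSup Q₀ p g := by
  refine iSup₂_le fun t _ => ?_
  set T := ENNReal.ofReal t
  set E := {x ∈ Q₀.set | T < dyadicSup Q₀ g x}
  have hrpow : T * (volume E / volume Q₀.set) ^ (1 / p) =
      (T ^ p * volume E / volume Q₀.set) ^ (1 / p) := by
    rw [mul_div_assoc, ENNReal.mul_rpow_of_nonneg _ _ (by positivity), ← ENNReal.rpow_mul,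
      mul_one_div_cancel hp.ne', ENNReal.rpow_one]
  rw [hrpow]
  refine le_iSup₂_of_le (stoppingCubes Q₀ g T)
    ⟨fun _ => isDyadicSub_of_mem_stoppingCubes, stoppingCubes_pairwiseDisjoint⟩ ?_
  gcongr
  exact rpow_mul_volume_lt_dyadicSup_le_tsum hp.le

end Cube

theorem sharpMaximal_le_jnNorm_general (n : ℕ) (p : ℝ) (hp : 1 < p)
    (Q₀ : Cube n) (f : (Fin n → ℝ) → ℝ) :
    Cube.wnorm Q₀ p (Cube.sharpMaximal Q₀ f) ≤ Cube.jnNorm Q₀ p f := by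
  rw [Cube.sharpMaximal_eq_dyadicSup, Cube.jnNorm_eq_packingSup]
  exact Cube.wnorm_dyadicSup_le_packingSup Q₀ _ (zero_lt_one.trans hp)

/-- **The weak `L^p` norm of the local dyadic sharp maximal function is controlled by the
John–Nirenberg functional.** -/
theorem sharpMaximal_le_jnNorm (n : ℕ) (p : ℝ) (hp : 1 < p)
    (Q₀ : Cube n) (f : (Fin n → ℝ) → ℝ) (hf : Measurable f)
    (hfint : IntegrableOn f Q₀.set) (hJN : Cube.jnNorm Q₀ p f ≠ ⊤) :
    Cube.wnorm Q₀ p (Cube.sharpMaximal Q₀ f) ≤ Cube.jnNorm Q₀ p f :=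
  sharpMaximal_le_jnNorm_general n p hp Q₀ f
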